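/- arXiv:2510.15462 — 3 statements merged into one kernel-verified Lean document; each statement's English description precedes it below -/
import Mathlib

section
/- Let (W,S) be a Coxeter system with S finite, and let m be the number of equivalence classes of the relation ≡ on F. Then every generating set of the cactus group C(W,S) has at least m elements. -/
/-!  Common framework: cactus groups of Coxeter systems. -/

namespace CactusFormal

open scoped Classical

variable {B : Type*} {W : Type*} [Group W] {M : CoxeterMatrix B}

/-- A subset `X` of `S` is irreducible (w.r.t. the Coxeter matrix `M`) if it admits no
partition into two nonempty parts that pairwise commute (label `2`). -/
def IsIrred (M : CoxeterMatrix B) (X : Set B) : Prop :=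
  ¬ ∃ X₁ X₂ : Set B, X₁.Nonempty ∧ X₂.Nonempty ∧ Disjoint X₁ X₂ ∧ X₁ ∪ X₂ = X ∧
      ∀ x ∈ X₁, ∀ y ∈ X₂, M x y = 2

/-- The standard parabolic subgroup `W_X`. -/
def parabolic (cs : CoxeterSystem M W) (X : Set B) : Subgroup W :=
  Subgroup.closure (cs.simple '' X)

/-- `w` is the longest element `ω_X`: a nontrivial element of `W_X` permuting
the simple reflections indexed by `X` by conjugation. -/
def IsOmega (cs : CoxeterSystem M W) (X : Set B) (w : W) : Prop :=
  w ∈ parabolic cs X ∧ w ≠ 1 ∧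
    ∀ x ∈ X, ∃ x' ∈ X, w * cs.simple x * w⁻¹ = cs.simple x'

/-- The element `ω_X` (junk value `1` if it does not exist). -/
noncomputable def omega (cs : CoxeterSystem M W) (X : Set B) : W :=
  if h : ∃ w, IsOmega cs X w then h.choose else 1

/-- The family `F` of nonempty subsets `X` of `S` with `W_X` finite and irreducible. -/
def F (cs : CoxeterSystem M W) : Set (Set B) :=
  {X | X.Nonempty ∧ (parabolic cs X : Set W).Finite ∧ IsIrred M X}

/-- The subset `ω_X Y ω_X⁻¹` of `S`, i.e. the set of indices whose simple reflection is
the conjugate by `ω_X` of a simple reflection indexed by `Y`. -/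
def omegaSet (cs : CoxeterSystem M W) (X Y : Set B) : Set B :=
  {z | ∃ y ∈ Y, cs.simple z = omega cs X * cs.simple y * (omega cs X)⁻¹}

/-- `Ω(X)`: the elements `Y ∈ F`, `Y ≠ X`, with `ω_X Y ω_X ⊆ S`. -/
def Omega (cs : CoxeterSystem M W) (X : Set B) : Set (Set B) :=
  {Y | Y ∈ F cs ∧ Y ≠ X ∧
    ∀ y ∈ Y, ∃ z, omega cs X * cs.simple y * (omega cs X)⁻¹ = cs.simple z}

/-- `Ω₀(X)`: the elements of `F` properly contained in `X`. -/
def Omega0 (cs : CoxeterSystem M W) (X : Set B) : Set (Set B) :=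
  {Y | Y ∈ F cs ∧ Y ⊂ X}

/-- `Ω_∞(X)`: the elements `Y` of `F` with `X ∪ Y` not irreducible. -/
def OmegaInf (cs : CoxeterSystem M W) (X : Set B) : Set (Set B) :=
  {Y | Y ∈ F cs ∧ ¬ IsIrred M (X ∪ Y)}

/-- The defining relators of the cactus group:
(R1) `c_X² = 1`; (R2) `c_X c_Y = c_{ω_X(Y)} c_X` for `Y ∈ Ω₀(X)`;
(R3) `c_X c_Y = c_Y c_X` for `Y ∈ Ω_∞(X)`. -/
def cactusRels (cs : CoxeterSystem M W) : Set (FreeGroup (F cs)) :=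
  {r | (∃ X : F cs, r = .of X * .of X) ∨
    (∃ X Y Z : F cs, (Y : Set B) ∈ Omega0 cs X ∧ (Z : Set B) = omegaSet cs X Y ∧
      r = .of X * .of Y * (.of Z * .of X)⁻¹) ∨
    (∃ X Y : F cs, (Y : Set B) ∈ OmegaInf cs X ∧
      r = .of X * .of Y * (.of Y * .of X)⁻¹)}

/-- The cactus group `C(W,S)`. -/
abbrev Cactus (cs : CoxeterSystem M W) := PresentedGroup (cactusRels cs)

/-- The generator `c_X` of the cactus group, for `X ∈ F`. -/
def gen (cs : CoxeterSystem M W) (X : F cs) : Cactus cs := PresentedGroup.of X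

/-- The relation `≡₀` on `F`: `Y ≡₀ Z` iff `Z = ω_X Y ω_X` for some `X ∈ F`. -/
def equivZero (cs : CoxeterSystem M W) (Y Z : Set B) : Prop :=
  Y ∈ F cs ∧ Z ∈ F cs ∧ ∃ X ∈ F cs, Z = omegaSet cs X Y

/-- The relation `≡`: the reflexive-transitive closure of `≡₀`. -/
def cEquiv (cs : CoxeterSystem M W) : Set B → Set B → Prop :=
  Relation.ReflTransGen (equivZero cs)

/-- The set of `≡`-equivalence classes on `F`. -/
def classes (cs : CoxeterSystem M W) :=
  Quot (fun X Y : F cs => cEquiv cs X Y)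

/-- `m`: the number of `≡`-equivalence classes on `F`. -/
noncomputable def numClasses (cs : CoxeterSystem M W) : ℕ := Nat.card (classes cs)

/-- `Λ` is a transversal for `≡`: it contains exactly one element of each class. -/
def IsTransversal (cs : CoxeterSystem M W) (Λ : Set (Set B)) : Prop :=
  Λ ⊆ F cs ∧ ∀ X ∈ F cs, ∃! Y, Y ∈ Λ ∧ cEquiv cs X Y

/-- A section `(Λ, Ψ)` for `(W,S)`, writing `Ψ X = (X̄, X̊)`. -/
structure IsSection (cs : CoxeterSystem M W) (Λ : Set (Set B))
    (Ψ : Set B → Set B × Set B) : Prop where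
  subset : Λ ⊆ F cs
  eq_of_mem : ∀ X ∈ Λ, Ψ X = (X, X)
  bar_mem : ∀ X ∈ F cs, (Ψ X).1 ∈ Λ
  ring_mem : ∀ X ∈ F cs, (Ψ X).2 ∈ Λ
  ring_subset : ∀ X ∈ F cs, (Ψ X).2 ⊆ (Ψ X).1
  omega_bar_ring : ∀ X ∈ F cs, omegaSet cs (Ψ X).1 (Ψ X).2 = X
  reducible_pairs : ∀ Y ∈ F cs, ∀ Z ∈ F cs, ¬ IsIrred M (Y ∪ Z) →
    ∃ X ∈ Λ, Y ∈ Omega cs X ∧ Z ∈ Omega cs X ∧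
      (omegaSet cs X Y ∈ Λ ∨ omegaSet cs X Z ∈ Λ)

/-- `Λ` is a cross section with section map `Ψ`: additionally, for every `X ∈ F`,
`Ψ X` is the unique pair `(Y, Z) ∈ Λ × Λ` with `ω_Y(Z) = X`
(where `ω_Y(Z)` is defined for `Z ∈ Ω(Y) ∪ {Y}`). -/
def IsCrossSection (cs : CoxeterSystem M W) (Λ : Set (Set B))
    (Ψ : Set B → Set B × Set B) : Prop :=
  IsSection cs Λ Ψ ∧ ∀ X ∈ F cs, ∀ Y Z : Set B,
    (Y ∈ Λ ∧ Z ∈ Λ ∧ (Z ∈ Omega cs Y ∨ Z = Y) ∧ omegaSet cs Y Z = X) ↔ Ψ X = (Y, Z)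


/-- Every generating set of the cactus group `C(W,S)` has at least `m` elements,
where `m` is the number of `≡`-equivalence classes on `F`. -/
theorem statement2 {B W : Type*} [Fintype B] [Group W] {M : CoxeterMatrix B}
    (cs : CoxeterSystem M W) :
    ∀ T : Set (Cactus cs), Subgroup.closure T = ⊤ →
      (numClasses cs : Cardinal) ≤ Cardinal.mk T := by
  classical
  intro T hT
  haveI : Finite (classes cs) :=
    Finite.of_surjective (Quot.mk _ : F cs → classes cs) (Quot.mk_surjective)
  haveI : Fintype (classes cs) := Fintype.ofFinite _
  set A := classes cs → ZMod 2 with hA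
  let q : F cs → classes cs := Quot.mk _
  let f : F cs → Multiplicative A := fun X => Multiplicative.ofAdd (Pi.single (q X) 1)
  have hfq : ∀ X Y : F cs, q X = q Y → f X = f Y := by
    intro X Y h; simp only [f, h]
  have hrels : ∀ r ∈ cactusRels cs, FreeGroup.lift f r = 1 := by
    rintro r (⟨X, rfl⟩ | ⟨X, Y, Z, hY, hZ, rfl⟩ | ⟨X, Y, hY, rfl⟩)
    · simp only [map_mul, FreeGroup.lift_apply_of, f, ← ofAdd_add, Pi.single_add]
      have h2 : (1 : ZMod 2) + 1 = 0 := by decide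
      rw [← Pi.single_add, h2, Pi.single_zero, ofAdd_zero]
    · have hYZ : f Y = f Z := by
        refine hfq _ _ (Quot.sound ?_)
        exact Relation.ReflTransGen.single ⟨Y.2, Z.2, X, X.2, hZ⟩
      simp only [map_mul, map_inv, FreeGroup.lift_apply_of, hYZ]
      rw [mul_inv_eq_one]
      exact mul_comm _ _
    · simp only [map_mul, map_inv, FreeGroup.lift_apply_of]
      rw [mul_inv_eq_one]
      exact mul_comm _ _
  let φ : Cactus cs →* Multiplicative A := PresentedGroup.toGroup hrels
  let S' : Set A := Multiplicative.toAdd '' (φ '' T)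
  -- the subgroup corresponding to the span of S'
  let p : Submodule (ZMod 2) A := Submodule.span (ZMod 2) S'
  let K : Subgroup (Multiplicative A) :=
    { carrier := {x | Multiplicative.toAdd x ∈ p}
      one_mem' := p.zero_mem
      mul_mem' := fun ha hb => p.add_mem ha hb
      inv_mem' := fun ha => p.neg_mem ha }
  have hsingle : ∀ X : F cs, Pi.single (q X) (1 : ZMod 2) ∈ p := by
    intro X
    have h1 : φ (PresentedGroup.of X) ∈ Subgroup.closure (φ '' T) := by
      rw [← MonoidHom.map_closure, hT]
      exact ⟨PresentedGroup.of X, trivial, rfl⟩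
    have h2 : Subgroup.closure (φ '' T) ≤ K := by
      rw [Subgroup.closure_le]
      intro x hx
      show Multiplicative.toAdd x ∈ p
      exact Submodule.subset_span ⟨x, hx, rfl⟩
    have h3 : Multiplicative.toAdd (φ (PresentedGroup.of X)) ∈ p := h2 h1
    have hof : φ (PresentedGroup.of X) = f X := PresentedGroup.toGroup.of hrels
    rw [hof] at h3
    exact h3
  have hspan : p = ⊤ := by
    rw [eq_top_iff, ← (Pi.basisFun (ZMod 2) (classes cs)).span_eq, Submodule.span_le]
    rintro x ⟨i, rfl⟩
    have : Pi.basisFun (ZMod 2) (classes cs) i = Pi.single i (1 : ZMod 2) := by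
      simp [Pi.basisFun_apply]
    rw [this]
    obtain ⟨X, hX⟩ := Quot.exists_rep i
    rw [← hX]
    exact hsingle X
  have hrank : (numClasses cs : Cardinal) = Module.rank (ZMod 2) A := by
    rw [rank_fun', numClasses, Nat.card_eq_fintype_card]
  rw [hrank]
  have h1 : Module.rank (ZMod 2) A = Module.rank (ZMod 2) p := by
    rw [hspan]; exact (rank_top _ _).symm
  rw [h1]
  calc Module.rank (ZMod 2) p ≤ Cardinal.mk S' := rank_span_le S'
    _ ≤ Cardinal.mk (φ '' T) := Cardinal.mk_image_le
    _ ≤ Cardinal.mk T := Cardinal.mk_image_le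

end CactusFormal
end

section
/- Let (W,S) be a Coxeter system with S finite. The cactus group C(W,S) is abelian if and only if the Coxeter group W is abelian. -/
/-!  Common framework: cactus groups of Coxeter systems. -/

namespace CactusFormal

open scoped Classical

variable {B : Type*} {W : Type*} [Group W] {M : CoxeterMatrix B}

section GeomRep


open Real Finset

open scoped Classical in
/-- Coefficients of the standard bilinear form. -/
noncomputable def kM {B : Type*} (M : CoxeterMatrix B) (a b : B) : ℝ :=
  if M a b = 0 then -1 else -Real.cos (π / M a b)

open scoped Classical in
noncomputable def eV {B : Type*} (b : B) : B → ℝ := Pi.single b 1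

section KM
variable {B : Type*} (M : CoxeterMatrix B)

lemma kM_diag (a : B) : kM M a a = 1 := by
  simp [kM, M.diagonal a]

lemma kM_symm (a b : B) : kM M a b = kM M b a := by
  simp [kM, M.symmetric a b]

lemma two_le_M {a b : B} (hab : a ≠ b) (h0 : M a b ≠ 0) : 2 ≤ M a b := by
  have h1 := M.off_diagonal a b hab
  omega

lemma pi_div_m_pos {m : ℕ} (hm : 2 ≤ m) : 0 < π / m := by
  have h0 : (0:ℝ) < (m:ℝ) := by
    have : (2:ℝ) ≤ (m:ℝ) := by exact_mod_cast hm
    linarith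
  positivity

lemma pi_div_m_le {m : ℕ} (hm : 2 ≤ m) : π / m ≤ π / 2 := by
  have hm' : (2:ℝ) ≤ (m:ℝ) := by exact_mod_cast hm
  exact div_le_div_of_nonneg_left Real.pi_pos.le (by norm_num) hm'

lemma kM_offdiag_nonpos {a b : B} (hab : a ≠ b) : kM M a b ≤ 0 := by
  unfold kM
  split
  · norm_num
  · rename_i h0
    have h2 : 2 ≤ M a b := two_le_M M hab h0
    have h3 := pi_div_m_pos (m := M a b) h2
    have h4 := pi_div_m_le (m := M a b) h2
    have : (0:ℝ) ≤ Real.cos (π / M a b) := by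
      apply Real.cos_nonneg_of_mem_Icc
      constructor
      · nlinarith [Real.pi_pos]
      · linarith
    linarith

lemma kM_eq_zero_of_two {a b : B} (h : M a b = 2) : kM M a b = 0 := by
  rw [kM, if_neg (by omega)]
  rw [h]
  norm_num

lemma kM_neg_of_ne_two {a b : B} (hab : a ≠ b) (h : M a b ≠ 2) : kM M a b < 0 := by
  unfold kM
  split
  · norm_num
  · rename_i h0
    have h2 : 2 ≤ M a b := two_le_M M hab h0
    have h3 : 3 ≤ M a b := by omega
    have hlt : π / (M a b) < π / 2 := by
      apply div_lt_div_of_pos_left Real.pi_pos (by norm_num)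
      exact_mod_cast by omega
    have hpos : (0:ℝ) < Real.cos (π / M a b) := by
      apply Real.cos_pos_of_mem_Ioo
      constructor
      · have := pi_div_m_pos (m := M a b) h2
        nlinarith [Real.pi_pos]
      · exact hlt
    linarith

lemma kM_eq_two_iff {a b : B} (hab : a ≠ b) : kM M a b = 0 ↔ M a b = 2 := by
  constructor
  · intro h
    by_contra hne
    exact absurd h (kM_neg_of_ne_two M hab hne).ne
  · exact kM_eq_zero_of_two M

end KM

section Rep
variable {B : Type*} [Fintype B] (M : CoxeterMatrix B)

/-- The "inner product with the simple root `a`". -/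
noncomputable def ipL (a : B) : (B → ℝ) →ₗ[ℝ] ℝ where
  toFun v := ∑ b, kM M a b * v b
  map_add' u v := by
    simp [mul_add, Finset.sum_add_distrib]
  map_smul' c v := by
    simp only [Pi.smul_apply, smul_eq_mul, RingHom.id_apply, Finset.mul_sum]
    congr 1; ext b; ring

lemma ipL_single (a b : B) : ipL M a (eV b) = kM M a b := by
  classical
  simp only [ipL, LinearMap.coe_mk, AddHom.coe_mk, eV]
  rw [Finset.sum_eq_single b]
  · simp
  · intro c _ hc
    rw [Pi.single_apply, if_neg hc, mul_zero]
  · intro h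
    exact absurd (Finset.mem_univ b) h

lemma eV_self (b : B) : eV b b = 1 := by
  simp [eV]

lemma eV_ne {a b : B} (h : a ≠ b) : eV b a = 0 := by
  classical
  simp [eV, Pi.single_apply, h]

/-- The simple reflection `σ_i` on `B → ℝ`. -/
noncomputable def sig (i : B) : Module.End ℝ (B → ℝ) :=
  LinearMap.id - LinearMap.smulRight ((2:ℝ) • ipL M i) (eV i)

lemma sig_apply (i : B) (v : B → ℝ) :
    sig M i v = v - (2 * ipL M i v) • eV i := by
  simp only [sig, LinearMap.sub_apply, LinearMap.id_apply, LinearMap.smulRight_apply,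
    LinearMap.smul_apply, smul_eq_mul]

lemma sig_single (i b : B) :
    sig M i (eV b) = eV b - (2 * kM M i b) • eV i := by
  rw [sig_apply, ipL_single]

lemma sig_single_self (i : B) : sig M i (eV i) = -eV i := by
  rw [sig_single, kM_diag]
  module

lemma sig_fixed (i : B) {v : B → ℝ} (h : ipL M i v = 0) : sig M i v = v := by
  rw [sig_apply, h]
  simp

lemma sig_sq (i : B) : sig M i * sig M i = 1 := by
  apply LinearMap.ext
  intro v
  have h1 : ipL M i (eV i) = 1 := by rw [ipL_single, kM_diag]
  simp only [Module.End.mul_apply, Module.End.one_apply]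
  rw [sig_apply, sig_apply, map_sub, map_smul, h1]
  simp only [smul_eq_mul, mul_one]
  module

end Rep

section Dihedral

/-- Chebyshev-like sequence. -/
noncomputable def pseq (c : ℝ) : ℕ → ℝ
  | 0 => 0
  | 1 => 1
  | (n+2) => 2*c*pseq c (n+1) - pseq c n

lemma pseq_zero (c : ℝ) : pseq c 0 = 0 := rfl
lemma pseq_one (c : ℝ) : pseq c 1 = 1 := rfl
lemma pseq_two (c : ℝ) (n : ℕ) : pseq c (n+2) = 2*c*pseq c (n+1) - pseq c n := rfl

lemma sin_rec (θ a : ℝ) : Real.sin (a + θ) = 2 * Real.cos θ * Real.sin a - Real.sin (a - θ) := by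
  rw [Real.sin_add, Real.sin_sub]
  ring

lemma pseq_sin {θ : ℝ} (hθ : Real.sin θ ≠ 0) (n : ℕ) :
    pseq (Real.cos θ) n = Real.sin (n * θ) / Real.sin θ := by
  induction n using Nat.strong_induction_on with
  | _ n ih =>
    match n with
    | 0 => simp [pseq_zero]
    | 1 => simp [pseq_one, div_self hθ]
    | (n+2) =>
      rw [pseq_two, ih (n+1) (by omega), ih n (by omega)]
      have h2 : ((n:ℝ)+2) * θ = ((n:ℝ)+1) * θ + θ := by ring
      have h0 : (n:ℝ) * θ = ((n:ℝ)+1) * θ - θ := by ring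
      push_cast
      rw [h2, h0, sin_rec θ (((n:ℝ)+1) * θ)]
      field_simp

lemma pseq_one_c (n : ℕ) : pseq 1 n = n := by
  induction n using Nat.strong_induction_on with
  | _ n ih =>
    match n with
    | 0 => simp [pseq_zero]
    | 1 => simp [pseq_one]
    | (n+2) =>
      rw [pseq_two, ih (n+1) (by omega), ih n (by omega)]
      push_cast
      ring

end Dihedral

section Rep2

variable {B : Type*} [Fintype B] (M : CoxeterMatrix B)

open scoped Classical in
/-- `cos (π / m)`, with the convention that it is `1` for `m = 0`. -/
noncomputable def cC (i j : B) : ℝ := if M i j = 0 then 1 else Real.cos (π / M i j)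

lemma kM_eq_neg_cC (i j : B) : kM M i j = - cC M i j := by
  unfold kM cC
  split <;> simp

lemma cC_symm (i j : B) : cC M i j = cC M j i := by
  unfold cC
  rw [M.symmetric i j]

lemma cC_nonneg {i j : B} (hij : i ≠ j) : 0 ≤ cC M i j := by
  have := kM_offdiag_nonpos M hij
  rw [kM_eq_neg_cC] at this
  linarith

lemma sin_theta_pos {m : ℕ} (hm : 2 ≤ m) : 0 < Real.sin (π / m) := by
  apply Real.sin_pos_of_pos_of_lt_pi (pi_div_m_pos hm)
  have := pi_div_m_le hm
  nlinarith [Real.pi_pos]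

lemma pseq_nonneg {i j : B} (hij : i ≠ j) {n : ℕ} (h : M i j = 0 ∨ n ≤ M i j) :
    0 ≤ pseq (cC M i j) n := by
  by_cases h0 : M i j = 0
  · rw [cC, if_pos h0, pseq_one_c]
    positivity
  · have hm : 2 ≤ M i j := two_le_M M hij h0
    have hn : n ≤ M i j := h.resolve_left h0
    have hs := sin_theta_pos hm
    rw [cC, if_neg h0, pseq_sin hs.ne']
    apply div_nonneg _ hs.le
    apply Real.sin_nonneg_of_nonneg_of_le_pi
    · positivity
    · have hm0 : (0:ℝ) < (M i j:ℝ) := by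
        have : (2:ℝ) ≤ (M i j:ℝ) := by exact_mod_cast hm
        linarith
      have hnm : (n:ℝ) ≤ (M i j : ℝ) := by exact_mod_cast hn
      calc (n:ℝ) * (π / M i j) ≤ (M i j : ℝ) * (π / M i j) := by
            apply mul_le_mul_of_nonneg_right hnm
            positivity
        _ = π := by field_simp

lemma pseq_2m {m : ℕ} (hm : 2 ≤ m) : pseq (Real.cos (π / m)) (2*m) = 0 := by
  have hs := sin_theta_pos hm
  rw [pseq_sin hs.ne']
  have : ((2*m : ℕ):ℝ) * (π / m) = 2 * π := by
    have hm0 : (m:ℝ) ≠ 0 := by positivity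
    push_cast
    field_simp
  rw [this]
  simp [Real.sin_two_pi]

lemma pseq_2m1 {m : ℕ} (hm : 2 ≤ m) : pseq (Real.cos (π / m)) (2*m+1) = 1 := by
  have hs := sin_theta_pos hm
  rw [pseq_sin hs.ne']
  have : ((2*m+1 : ℕ):ℝ) * (π / m) = π / m + 2 * π := by
    have hm0 : (m:ℝ) ≠ 0 := by positivity
    push_cast
    field_simp
    ring
  rw [this, Real.sin_add_two_pi, div_self hs.ne']

variable {M}

section TwoGen

variable {i j : B} (hij : i ≠ j)

private noncomputable abbrev cc (M : CoxeterMatrix B) (i j : B) := cC M i j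

lemma sig_eV_i_of_ne : sig M j (eV i) = eV i + (2 * cC M i j) • eV j := by
  rw [sig_single, kM_symm, kM_eq_neg_cC]
  module

include hij

lemma T_eV_i :
    (sig M i * sig M j) (eV i)
      = (4 * cC M i j^2 - 1) • eV i + (2 * cC M i j) • eV j := by
  rw [Module.End.mul_apply, sig_eV_i_of_ne, map_add, map_smul, sig_single_self,
    sig_single, kM_eq_neg_cC]
  module

lemma T_eV_j :
    (sig M i * sig M j) (eV j) = (-(2 * cC M i j)) • eV i + (-1 : ℝ) • eV j := by
  rw [Module.End.mul_apply, sig_single_self, map_neg, sig_single, kM_eq_neg_cC]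
  module

lemma T_pow (k : ℕ) :
    ((sig M i * sig M j)^k) (eV i)
        = pseq (cC M i j) (2*k+1) • eV i + pseq (cC M i j) (2*k) • eV j
      ∧ ((sig M i * sig M j)^k) (eV j)
        = (-(pseq (cC M i j) (2*k))) • eV i
            + (pseq (cC M i j) (2*k+1) - 2 * cC M i j * pseq (cC M i j) (2*k)) • eV j := by
  set c := cC M i j with hc
  induction k with
  | zero =>
    constructor <;> simp [pseq_zero, pseq_one]
  | succ k ih =>
    obtain ⟨ih1, ih2⟩ := ih
    have hTi := T_eV_i (M := M) hij
    have hTj := T_eV_j (M := M) hij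
    rw [← hc] at hTi hTj
    have e1 : ((sig M i * sig M j)^(k+1)) (eV i)
        = ((sig M i * sig M j)^k) ((sig M i * sig M j) (eV i)) := by
      rw [pow_succ, Module.End.mul_apply]
    have e2 : ((sig M i * sig M j)^(k+1)) (eV j)
        = ((sig M i * sig M j)^k) ((sig M i * sig M j) (eV j)) := by
      rw [pow_succ, Module.End.mul_apply]
    have key1 : pseq c (2*(k+1)+1) = 2*c*pseq c (2*k+2) - pseq c (2*k+1) := by
      have : 2*(k+1)+1 = (2*k+1)+2 := by ring
      rw [this, pseq_two]
    have key0 : pseq c (2*(k+1)) = 2*c*pseq c (2*k+1) - pseq c (2*k) := by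
      have : 2*(k+1) = (2*k)+2 := by ring
      rw [this, pseq_two]
    have key2 : pseq c (2*k+2) = 2*c*pseq c (2*k+1) - pseq c (2*k) := by
      rw [pseq_two]
    constructor
    · rw [e1, hTi, map_add, map_smul, map_smul, ih1, ih2, key1, key2, key0]
      module
    · rw [e2, hTj, map_add, map_smul, map_smul, ih1, ih2, key1, key2, key0]
      module

end TwoGen

end Rep2

section Rep3

variable {B : Type*} [Fintype B] {M : CoxeterMatrix B}

lemma cC_sq_lt_one {i j : B} (hij : i ≠ j) (h0 : M i j ≠ 0) : cC M i j ^ 2 < 1 := by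
  have hm : 2 ≤ M i j := two_le_M M hij h0
  have hs := sin_theta_pos hm
  rw [cC, if_neg h0]
  nlinarith [Real.sin_sq_add_cos_sq (π / M i j)]

lemma T_fix {i j : B} {r : B → ℝ} (hi : ipL M i r = 0) (hj : ipL M j r = 0) (k : ℕ) :
    ((sig M i * sig M j)^k) r = r := by
  induction k with
  | zero => simp
  | succ k ih =>
    rw [pow_succ, Module.End.mul_apply, Module.End.mul_apply, sig_fixed M j hj,
      sig_fixed M i hi]
    exact ih

lemma T_pow_m_eq_one {i j : B} (hij : i ≠ j) (h0 : M i j ≠ 0) :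
    (sig M i * sig M j)^(M i j) = 1 := by
  have hm : 2 ≤ M i j := two_le_M M hij h0
  set m := M i j with hmdef
  set c := cC M i j with hc
  have hcc : c = Real.cos (π / m) := by rw [hc, cC, if_neg h0]
  have hc2 : c^2 < 1 := cC_sq_lt_one hij h0
  have hne : (1 - c^2) ≠ 0 := by nlinarith
  apply LinearMap.ext
  intro v
  set a := (ipL M i v + c * ipL M j v) / (1 - c^2) with ha
  set b := (ipL M j v + c * ipL M i v) / (1 - c^2) with hb
  set r := v - a • eV i - b • eV j with hr
  have hipii : ipL M i (eV i) = 1 := by rw [ipL_single, kM_diag]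
  have hipjj : ipL M j (eV j) = 1 := by rw [ipL_single, kM_diag]
  have hipij : ipL M i (eV j) = -c := by rw [ipL_single, kM_eq_neg_cC]
  have hipji : ipL M j (eV i) = -c := by rw [ipL_single, kM_eq_neg_cC, cC_symm]
  have hri : ipL M i r = 0 := by
    rw [hr, map_sub, map_sub, map_smul, map_smul, hipii, hipij, ha, hb]
    field_simp
    linear_combination (-(ipL M i v)) * mul_inv_cancel₀ hne
  have hrj : ipL M j r = 0 := by
    rw [hr, map_sub, map_sub, map_smul, map_smul, hipjj, hipji, ha, hb]
    field_simp
    linear_combination (-(ipL M j v)) * mul_inv_cancel₀ hne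
  have hv : v = a • eV i + b • eV j + r := by rw [hr]; module
  have h2m := (T_pow (M := M) hij (M i j)).1
  have h2m' := (T_pow (M := M) hij (M i j)).2
  rw [← hc, ← hmdef] at h2m h2m'
  rw [hcc] at h2m h2m'
  rw [pseq_2m hm, pseq_2m1 hm] at h2m h2m'
  rw [Module.End.one_apply, hv, map_add, map_add, map_smul, map_smul, h2m, h2m',
    T_fix hri hrj]
  rw [← hcc]
  module

lemma sig_liftable : M.IsLiftable (fun i => sig M i) := by
  intro i j
  by_cases hij : i = j
  · subst hij
    rw [M.diagonal, pow_one]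
    exact sig_sq M i
  · by_cases h0 : M i j = 0
    · rw [h0, pow_zero]
    · exact T_pow_m_eq_one hij h0

variable {W : Type*} [Group W]

/-- The geometric representation. -/
noncomputable def rho (cs : CoxeterSystem M W) : W →* Module.End ℝ (B → ℝ) :=
  cs.lift ⟨fun i => sig M i, sig_liftable⟩

lemma rho_simple (cs : CoxeterSystem M W) (i : B) : rho cs (cs.simple i) = sig M i :=
  cs.lift_apply_simple sig_liftable i

/-- The standard bilinear form. -/
noncomputable def BilF (M : CoxeterMatrix B) (u v : B → ℝ) : ℝ := ∑ a, u a * ipL M a v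

lemma BilF_e_left (v : B → ℝ) (a : B) : BilF M (eV a) v = ipL M a v := by
  classical
  unfold BilF
  rw [Finset.sum_eq_single a]
  · rw [eV_self, one_mul]
  · intro c _ hc
    rw [eV_ne hc, zero_mul]
  · intro h
    exact absurd (Finset.mem_univ a) h

lemma ipL_eq_sum (a : B) (v : B → ℝ) : ipL M a v = ∑ b, kM M a b * v b := rfl

lemma BilF_e_right (u : B → ℝ) (b : B) : BilF M u (eV b) = ipL M b u := by
  unfold BilF
  rw [ipL_eq_sum]
  congr 1
  ext a
  rw [ipL_single, kM_symm]
  ring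

lemma BilF_e_e (a b : B) : BilF M (eV a) (eV b) = kM M a b := by
  rw [BilF_e_left, ipL_single]

lemma BilF_add_left (u u' v : B → ℝ) : BilF M (u + u') v = BilF M u v + BilF M u' v := by
  unfold BilF
  rw [← Finset.sum_add_distrib]
  congr 1; ext a
  simp [add_mul]

lemma BilF_smul_left (c : ℝ) (u v : B → ℝ) : BilF M (c • u) v = c * BilF M u v := by
  unfold BilF
  rw [Finset.mul_sum]
  congr 1; ext a
  simp; ring

lemma BilF_add_right (u v v' : B → ℝ) : BilF M u (v + v') = BilF M u v + BilF M u v' := by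
  unfold BilF
  rw [← Finset.sum_add_distrib]
  congr 1; ext a
  rw [map_add]; ring

lemma BilF_smul_right (c : ℝ) (u v : B → ℝ) : BilF M u (c • v) = c * BilF M u v := by
  unfold BilF
  rw [Finset.mul_sum]
  congr 1; ext a
  rw [map_smul]; simp; ring

lemma BilF_sub_left (u u' v : B → ℝ) : BilF M (u - u') v = BilF M u v - BilF M u' v := by
  have := BilF_add_left (M := M) (u - u') u' v
  simp at this
  linarith

lemma BilF_sub_right (u v v' : B → ℝ) : BilF M u (v - v') = BilF M u v - BilF M u v' := by
  have := BilF_add_right (M := M) u (v - v') v'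
  simp at this
  linarith

lemma BilF_sig_invariant (i : B) (u v : B → ℝ) :
    BilF M (sig M i u) (sig M i v) = BilF M u v := by
  simp only [sig_apply, BilF_sub_left, BilF_sub_right, BilF_smul_left, BilF_smul_right,
    BilF_e_e, BilF_e_left, BilF_e_right, kM_diag, map_sub, map_smul, ipL_single,
    smul_eq_mul]
  ring

lemma BilF_rho_invariant (cs : CoxeterSystem M W) (w : W) (u v : B → ℝ) :
    BilF M (rho cs w u) (rho cs w v) = BilF M u v := by
  induction w using cs.simple_induction_left with
  | one => simp
  | mul_simple_left i w ih =>
    rw [map_mul, rho_simple, Module.End.mul_apply, Module.End.mul_apply,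
      BilF_sig_invariant]
    exact ih

end Rep3

section Tits

open CoxeterSystem

variable {B : Type*} [Fintype B] {M : CoxeterMatrix B} {W : Type*} [Group W]

/-- Nonnegative vectors. -/
def Pos (v : B → ℝ) : Prop := ∀ b, 0 ≤ v b

noncomputable def aCoef (c : ℝ) (k : ℕ) : ℝ := if Even k then pseq c (k+1) else pseq c k
noncomputable def bCoef (c : ℝ) (k : ℕ) : ℝ := if Even k then pseq c k else pseq c (k+1)

lemma rho_alt (cs : CoxeterSystem M W) {i j : B} (hij : i ≠ j) (k : ℕ) :
    rho cs (cs.wordProd (alternatingWord i j k)) (eV i)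
      = aCoef (cC M i j) k • eV i + bCoef (cC M i j) k • eV j := by
  set c := cC M i j with hc
  induction k with
  | zero =>
    have h0 : alternatingWord i j 0 = [] := rfl
    rw [h0, cs.wordProd_nil, map_one]
    norm_num [Module.End.one_apply, aCoef, bCoef, pseq_zero, pseq_one]
  | succ k ih =>
    rw [alternatingWord_succ', cs.wordProd_cons, map_mul, Module.End.mul_apply, ih]
    by_cases hk : Even k
    · have hk' : ¬ Even (k+1) := by simp [Nat.even_add_one, hk]
      rw [if_pos hk, rho_simple]
      rw [map_add, map_smul, map_smul, sig_eV_i_of_ne, sig_single_self, ← hc]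
      simp only [aCoef, bCoef, if_pos hk, if_neg hk', pseq_two]
      module
    · have hk' : Even (k+1) := Nat.even_add_one.mpr hk
      rw [if_neg hk, rho_simple]
      have hji : sig M i (eV j) = eV j + (2 * cC M i j) • eV i := by
        rw [sig_single, kM_eq_neg_cC]
        module
      rw [map_add, map_smul, map_smul, sig_single_self, hji, ← hc]
      simp only [aCoef, bCoef, if_pos hk', if_neg hk, pseq_two]
      module

lemma length_mul_simple_of_not_descent (cs : CoxeterSystem M W) {w : W} {i : B}
    (h : ¬ cs.IsRightDescent w i) :
    cs.length (w * cs.simple i) = cs.length w + 1 := by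
  rcases cs.length_mul_simple w i with h' | h'
  · exact h'
  · exfalso
    exact h (by unfold CoxeterSystem.IsRightDescent; omega)

lemma length_mul_simple_of_descent (cs : CoxeterSystem M W) {w : W} {i : B}
    (h : cs.IsRightDescent w i) :
    cs.length (w * cs.simple i) + 1 = cs.length w := by
  rcases cs.length_mul_simple w i with h' | h'
  · exfalso
    unfold CoxeterSystem.IsRightDescent at h
    omega
  · exact h'

lemma not_desc_of_eq (cs : CoxeterSystem M W) {u w : W} {t : B} {ω : List B}
    (h : w = u * cs.simple t * cs.wordProd ω)
    (hlen : cs.length u + (ω.length + 1) ≤ cs.length w) :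
    ¬ cs.IsRightDescent u t := by
  intro hd
  have h1 := length_mul_simple_of_descent cs hd
  have h2 : cs.length w ≤ cs.length (u * cs.simple t) + cs.length (cs.wordProd ω) := by
    rw [h]
    exact cs.length_mul_le _ _
  have h3 := cs.length_wordProd_le ω
  omega

theorem tits_aux (cs : CoxeterSystem M W) :
    ∀ n w (i : B), cs.length w = n → ¬ cs.IsRightDescent w i → Pos (rho cs w (eV i)) := by
  intro n
  induction n using Nat.strong_induction_on with
  | _ n ih =>
    intro w i hlen hdesc
    rcases eq_or_ne w 1 with rfl | hw
    · intro b
      simp only [map_one, Module.End.one_apply]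
      rcases eq_or_ne b i with rfl | hb
      · rw [eV_self]; norm_num
      · rw [eV_ne hb]
    · obtain ⟨j, hj⟩ := cs.exists_rightDescent_of_ne_one hw
      have hij : i ≠ j := by
        rintro rfl
        exact hdesc hj
      have spiral : ∀ d (u : W) (k : ℕ), 1 ≤ k →
          w = u * cs.wordProd (alternatingWord i j k) →
          cs.length u + k = cs.length w → cs.length u ≤ d →
          ∃ u' k', 1 ≤ k' ∧ w = u' * cs.wordProd (alternatingWord i j k') ∧
            cs.length u' + k' = cs.length w ∧
            ¬ cs.IsRightDescent u' (if Even k' then j else i) := by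
        intro d
        induction d with
        | zero =>
          intro u k hk hw' hl hd
          refine ⟨u, k, hk, hw', hl, ?_⟩
          have : u = 1 := by
            rw [← cs.length_eq_zero_iff]
            omega
          rw [this]
          exact cs.not_isRightDescent_one _
        | succ d ihd =>
          intro u k hk hw' hl hd
          by_cases hdu : cs.IsRightDescent u (if Even k then j else i)
          · set t := if Even k then j else i with ht
            have hcons : cs.wordProd (alternatingWord i j (k+1))
                = cs.simple t * cs.wordProd (alternatingWord i j k) := by
              rw [alternatingWord_succ', cs.wordProd_cons]
            have hlt := length_mul_simple_of_descent cs hdu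
            refine ihd (u * cs.simple t) (k+1) (by omega) ?_ (by omega) (by omega)
            rw [hcons, ← mul_assoc, mul_assoc u, cs.simple_mul_simple_self, mul_one]
            exact hw'
          · exact ⟨u, k, hk, hw', hl, hdu⟩
      have halt1 : alternatingWord i j 1 = [j] := by
        have := alternatingWord_succ' i j 0
        simpa [alternatingWord] using this
      have hinit : w = (w * cs.simple j) * cs.wordProd (alternatingWord i j 1) := by
        rw [halt1, cs.wordProd_singleton, mul_assoc, cs.simple_mul_simple_self, mul_one]
      have hlj := length_mul_simple_of_descent cs hj
      obtain ⟨u, k, hk, hw', hl, hstop⟩ :=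
        spiral (cs.length w) (w * cs.simple j) 1 le_rfl hinit (by omega) (by omega)
      obtain ⟨k₀, rfl⟩ : ∃ k₀, k = k₀ + 1 := ⟨k - 1, by omega⟩
      have hsplit : ∀ t', alternatingWord i j (k₀+1) = t' :: alternatingWord i j k₀ →
          ¬ cs.IsRightDescent u t' := by
        intro t' hcons
        refine not_desc_of_eq cs (w := w) (u := u) (ω := alternatingWord i j k₀) (t := t') ?_ ?_
        · rw [mul_assoc, ← cs.wordProd_cons, ← hcons]
          exact hw'
        · rw [length_alternatingWord]
          omega
      have hcons0 : alternatingWord i j (k₀+1)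
          = (if Even k₀ then j else i) :: alternatingWord i j k₀ :=
        alternatingWord_succ' i j k₀
      have hother : ¬ cs.IsRightDescent u (if Even k₀ then j else i) := hsplit _ hcons0
      have huij : ¬ cs.IsRightDescent u i ∧ ¬ cs.IsRightDescent u j := by
        rcases Nat.even_or_odd k₀ with h | h
        · have h1 : ¬ Even (k₀+1) := by simp [Nat.even_add_one, h]
          rw [if_pos h] at hother
          rw [if_neg h1] at hstop
          exact ⟨hstop, hother⟩
        · have h0 : ¬ Even k₀ := Nat.not_even_iff_odd.mpr h
          have h1 : Even (k₀+1) := Nat.even_add_one.mpr h0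
          rw [if_neg h0] at hother
          rw [if_pos h1] at hstop
          exact ⟨hother, hstop⟩
      have pui := ih (cs.length u) (by omega) u i rfl huij.1
      have puj := ih (cs.length u) (by omega) u j rfl huij.2
      have hbound : M i j = 0 ∨ k₀ + 2 ≤ M i j := by
        by_cases h0 : M i j = 0
        · exact Or.inl h0
        · right
          have hws : cs.length (w * cs.simple i) = cs.length w + 1 :=
            length_mul_simple_of_not_descent cs hdesc
          have hconcat : cs.wordProd (alternatingWord j i (k₀+2))
              = cs.wordProd (alternatingWord i j (k₀+1)) * cs.simple i := by
            rw [alternatingWord_succ, cs.wordProd_concat]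
          have heq : w * cs.simple i
              = u * cs.wordProd (alternatingWord j i (k₀+2)) := by
            rw [hconcat, hw', mul_assoc]
          have h1 : cs.length (w * cs.simple i)
              ≤ cs.length u + cs.length (cs.wordProd (alternatingWord j i (k₀+2))) := by
            rw [heq]
            exact cs.length_mul_le _ _
          have h2 := cs.length_wordProd_le (alternatingWord j i (k₀+2))
          rw [length_alternatingWord] at h2
          have hred : cs.IsReduced (alternatingWord j i (k₀+2)) := by
            unfold CoxeterSystem.IsReduced
            rw [length_alternatingWord]
            omega
          by_contra hgt
          push_neg at hgt
          refine cs.not_isReduced_alternatingWord j i ?_ ?_ hred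
          · rw [M.symmetric j i]
            exact h0
          · rw [M.symmetric j i]
            omega
      have hbound' : ∀ nn, nn ≤ k₀ + 2 → (M i j = 0 ∨ nn ≤ M i j) := by
        intro nn h
        rcases hbound with h0 | h0
        · exact Or.inl h0
        · exact Or.inr (by omega)
      have ha : 0 ≤ aCoef (cC M i j) (k₀+1) := by
        unfold aCoef
        split
        · exact pseq_nonneg M hij (hbound' (k₀+1+1) (by omega))
        · exact pseq_nonneg M hij (hbound' (k₀+1) (by omega))
      have hb : 0 ≤ bCoef (cC M i j) (k₀+1) := by
        unfold bCoef
        split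
        · exact pseq_nonneg M hij (hbound' (k₀+1) (by omega))
        · exact pseq_nonneg M hij (hbound' (k₀+1+1) (by omega))
      have hformula : rho cs w (eV i)
          = aCoef (cC M i j) (k₀+1) • rho cs u (eV i)
            + bCoef (cC M i j) (k₀+1) • rho cs u (eV j) := by
        rw [hw', map_mul, Module.End.mul_apply, rho_alt cs hij, map_add, map_smul, map_smul]
      intro b
      rw [hformula]
      simp only [Pi.add_apply, Pi.smul_apply, smul_eq_mul]
      exact add_nonneg (mul_nonneg ha (pui b)) (mul_nonneg hb (puj b))

theorem tits_pos (cs : CoxeterSystem M W) {w : W} {i : B}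
    (h : ¬ cs.IsRightDescent w i) : Pos (rho cs w (eV i)) :=
  tits_aux cs (cs.length w) w i rfl h

theorem tits_neg (cs : CoxeterSystem M W) {w : W} {i : B}
    (h : cs.IsRightDescent w i) : ∀ b, (rho cs w (eV i)) b ≤ 0 := by
  have h2 : ¬ cs.IsRightDescent (w * cs.simple i) i :=
    (cs.isRightDescent_iff_not_isRightDescent_mul).mp h
  have h3 := tits_pos cs h2
  have h4 : rho cs (w * cs.simple i) (eV i) = - rho cs w (eV i) := by
    rw [map_mul, Module.End.mul_apply, rho_simple, sig_single_self, map_neg]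
  intro b
  have := h3 b
  rw [h4] at this
  simp only [Pi.neg_apply] at this
  linarith

end Tits


end GeomRep

section OmegaTheory

open CoxeterSystem

variable {B : Type*} [Fintype B] {M : CoxeterMatrix B} {W : Type*} [Group W]
variable (cs : CoxeterSystem M W)

lemma simple_injective : Function.Injective cs.simple := by
  intro x y hxy
  by_contra hne
  have h1 : rho cs (cs.simple x) = rho cs (cs.simple y) := by rw [hxy]
  rw [rho_simple, rho_simple] at h1
  have h2 : sig M x (eV x) = sig M y (eV x) := by rw [h1]
  rw [sig_single_self, sig_single] at h2
  have h3 := congrFun h2 x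
  simp only [Pi.neg_apply, Pi.sub_apply, Pi.smul_apply, smul_eq_mul] at h3
  rw [eV_self, eV_ne hne] at h3
  norm_num at h3

lemma rho_support {X : Set B} {w : W} (hw : w ∈ parabolic cs X)
    {b : B} (hb : b ∉ X) : ∀ v, (rho cs w v) b = v b := by
  induction hw using Subgroup.closure_induction with
  | mem g hg =>
    intro v
    obtain ⟨x₀, hx₀, rfl⟩ := hg
    rw [rho_simple, sig_apply]
    have hbx : b ≠ x₀ := fun h => hb (h ▸ hx₀)
    simp only [Pi.sub_apply, Pi.smul_apply, smul_eq_mul]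
    rw [eV_ne hbx, mul_zero, sub_zero]
  | one =>
    intro v
    simp
  | mul g h _ _ ihg ihh =>
    intro v
    rw [map_mul, Module.End.mul_apply, ihg, ihh]
  | inv g _ ihg =>
    intro v
    have key : rho cs g (rho cs g⁻¹ v) = v := by
      rw [← Module.End.mul_apply, ← map_mul, mul_inv_cancel, map_one, Module.End.one_apply]
    calc (rho cs g⁻¹ v) b = (rho cs g (rho cs g⁻¹ v)) b := (ihg _).symm
      _ = v b := by rw [key]

lemma eq_one_of_plus {X : Set B} {u : W} (hu : u ∈ parabolic cs X)
    (h : ∀ x ∈ X, ∃ x', rho cs u (eV x) = eV x') : u = 1 := by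
  by_contra hne
  obtain ⟨i, hi⟩ := cs.exists_rightDescent_of_ne_one hne
  have hneg := tits_neg cs hi
  by_cases hiX : i ∈ X
  · obtain ⟨x', hx'⟩ := h i hiX
    have h2 := hneg x'
    rw [hx', eV_self] at h2
    linarith
  · have h2 := hneg i
    rw [rho_support cs hu hiX, eV_self] at h2
    linarith

lemma solution_sign {X : Set B} {w : W} (hw : IsOmega cs X w) :
    ∀ x ∈ X, ∃ x' ∈ X, w * cs.simple x * w⁻¹ = cs.simple x' ∧
      (rho cs w (eV x) = eV x' ∨ rho cs w (eV x) = - eV x') := by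
  intro x hx
  obtain ⟨x', hx', hcj⟩ := hw.2.2 x hx
  refine ⟨x', hx', hcj, ?_⟩
  have hγ : rho cs w (rho cs w⁻¹ (eV x')) = eV x' := by
    rw [← Module.End.mul_apply, ← map_mul, mul_inv_cancel, map_one, Module.End.one_apply]
  set γ := rho cs w⁻¹ (eV x') with hγdef
  set β := rho cs w (eV x) with hβdef
  have h2 : rho cs w (sig M x γ) = - eV x' := by
    have e1 : rho cs (w * cs.simple x * w⁻¹) (eV x') = - eV x' := by
      rw [hcj, rho_simple, sig_single_self]
    calc rho cs w (sig M x γ)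
        = rho cs w (rho cs (cs.simple x) (rho cs w⁻¹ (eV x'))) := by rw [rho_simple]
      _ = rho cs (w * cs.simple x * w⁻¹) (eV x') := by
          rw [map_mul, map_mul, Module.End.mul_apply, Module.End.mul_apply]
      _ = - eV x' := e1
  rw [sig_apply, map_sub, map_smul, hγ, ← hβdef] at h2
  -- h2 : eV x' - (2 * ipL M x γ) • β = - eV x'
  set s := ipL M x γ with hs
  have h3 : s • β = eV x' := by
    have h3' : ((2:ℝ) * s) • β = (2:ℝ) • eV x' := by
      have h4 : ((2:ℝ) * s) • β = eV x' - (- eV x') := by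
        rw [← h2]
        module
      rw [h4]
      module
    have h5 := congrArg (fun v => ((2:ℝ)⁻¹) • v) h3'
    simpa [smul_smul] using h5
  have hββ : BilF M β β = 1 := by
    rw [hβdef, BilF_rho_invariant, BilF_e_e, kM_diag]
  have hs2 : s^2 = 1 := by
    have : BilF M (eV x') (eV x') = 1 := by rw [BilF_e_e, kM_diag]
    rw [← h3, BilF_smul_left, BilF_smul_right, hββ, mul_one] at this
    nlinarith
  have hs1 : s = 1 ∨ s = -1 := by
    have hfac : (s - 1) * (s + 1) = 0 := by nlinarith
    rcases mul_eq_zero.mp hfac with h | h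
    · left; linarith
    · right; linarith
  rcases hs1 with h | h
  · left
    rw [h, one_smul] at h3
    exact h3
  · right
    rw [h] at h3
    have : β = - eV x' := by
      rw [← h3]
      module
    exact this

lemma solution_allminus {X : Set B} (hirr : IsIrred M X) {w : W} (hw : IsOmega cs X w) :
    ∀ x ∈ X, ∃ x' ∈ X, w * cs.simple x * w⁻¹ = cs.simple x' ∧
      rho cs w (eV x) = - eV x' := by
  classical
  set X₁ := {x | x ∈ X ∧ ∃ x' ∈ X, w * cs.simple x * w⁻¹ = cs.simple x' ∧
    rho cs w (eV x) = eV x'} with hX₁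
  set X₂ := {x | x ∈ X ∧ ∃ x' ∈ X, w * cs.simple x * w⁻¹ = cs.simple x' ∧
    rho cs w (eV x) = - eV x'} with hX₂
  have hsign : ∀ x ∈ X, x ∈ X₁ ∪ X₂ := by
    intro x hx
    obtain ⟨x', hx', hcj, hpm⟩ := solution_sign cs hw x hx
    rcases hpm with h | h
    · exact Or.inl ⟨hx, x', hx', hcj, h⟩
    · exact Or.inr ⟨hx, x', hx', hcj, h⟩
  have hdisj : Disjoint X₁ X₂ := by
    rw [Set.disjoint_left]
    rintro x ⟨_, x', hx', _, hr⟩ ⟨_, x'', hx'', _, hr'⟩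
    have h1 : eV x' = - eV (B := B) x'' := by rw [← hr, ← hr']
    have h2 := congrFun h1 x'
    rw [eV_self] at h2
    rcases eq_or_ne x' x'' with rfl | hne
    · rw [Pi.neg_apply, eV_self] at h2
      norm_num at h2
    · rw [Pi.neg_apply, eV_ne hne] at h2
      norm_num at h2
  have hcross : ∀ x ∈ X₁, ∀ y ∈ X₂, M x y = 2 := by
    rintro x ⟨hxX, x', hx'X, hcjx, hrx⟩ y ⟨hyX, y', hy'X, hcjy, hry⟩
    have hxy : x ≠ y := by
      rintro rfl
      exact Set.disjoint_left.mp hdisj ⟨hxX, x', hx'X, hcjx, hrx⟩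
        ⟨hyX, y', hy'X, hcjy, hry⟩
    have hx'y' : x' ≠ y' := by
      rintro rfl
      apply hxy
      apply simple_injective cs
      have h := hcjx.trans hcjy.symm
      rw [mul_assoc, mul_assoc] at h
      exact mul_right_cancel (mul_left_cancel h)
    have hinv := BilF_rho_invariant cs w (eV x) (eV y)
    rw [hrx, hry] at hinv
    have hneg : BilF M (eV x') (-(eV (B := B) y')) = - kM M x' y' := by
      have he : -(eV (B := B) y') = (-1 : ℝ) • eV y' := by module
      rw [he, BilF_smul_right, BilF_e_e]
      ring
    rw [hneg, BilF_e_e] at hinv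
    by_contra hMne
    have h1 := kM_neg_of_ne_two M hxy hMne
    have h2 := kM_offdiag_nonpos M hx'y'
    linarith
  have hunion : X₁ ∪ X₂ = X := by
    apply subset_antisymm
    · rintro x (h | h)
      · exact h.1
      · exact h.1
    · intro x hx
      exact hsign x hx
  have hempty : X₁ = ∅ := by
    by_contra h1
    by_cases h2 : X₂ = ∅
    · apply hw.2.1
      apply eq_one_of_plus cs hw.1
      intro x hx
      rcases hsign x hx with hx1 | hx2
      · obtain ⟨_, x', _, _, hr⟩ := hx1
        exact ⟨x', hr⟩
      · rw [h2] at hx2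
        exact absurd hx2 (Set.notMem_empty x)
    · exact hirr ⟨X₁, X₂, Set.nonempty_iff_ne_empty.mpr h1,
        Set.nonempty_iff_ne_empty.mpr h2, hdisj, hunion, hcross⟩
  intro x hx
  rcases hsign x hx with h1 | h2
  · rw [hempty] at h1
    exact absurd h1 (Set.notMem_empty x)
  · exact h2.2

lemma isOmega_unique {X : Set B} (hirr : IsIrred M X) {w w' : W}
    (hw : IsOmega cs X w) (hw' : IsOmega cs X w') : w = w' := by
  classical
  have ham := solution_allminus cs hirr hw
  have ham' := solution_allminus cs hirr hw'
  choose! g hgX hgcj hgr using ham'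
  have hmaps : Set.MapsTo g X X := fun x hx => hgX x hx
  have hinj : Set.InjOn g X := by
    intro a ha b hb hab
    have h1 := hgcj a ha
    have h2 := hgcj b hb
    rw [hab] at h1
    have h3 : cs.simple a = cs.simple b := by
      have h := h1.trans h2.symm
      rw [mul_assoc, mul_assoc] at h
      exact mul_right_cancel (mul_left_cancel h)
    exact simple_injective cs h3
  have hsurj : Set.SurjOn g X X :=
    ((Set.Finite.injOn_iff_bijOn_of_mapsTo (Set.toFinite X) hmaps).mp hinj).surjOn
  have hone : w'⁻¹ * w = 1 := by
    apply eq_one_of_plus cs (mul_mem (inv_mem hw'.1) hw.1)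
    intro x hx
    obtain ⟨x', hx'X, hcj, hr⟩ := ham x hx
    obtain ⟨x₁, hx₁X, hgx₁⟩ := hsurj hx'X
    have h2 := hgr x₁ hx₁X
    rw [hgx₁] at h2
    have hinvr : rho cs w'⁻¹ (eV x') = - eV x₁ := by
      have hkey : rho cs w'⁻¹ (rho cs w' (eV x₁)) = eV x₁ := by
        rw [← Module.End.mul_apply, ← map_mul, inv_mul_cancel, map_one, Module.End.one_apply]
      rw [h2, map_neg] at hkey
      rw [← neg_eq_iff_eq_neg]
      rw [← hkey]
    refine ⟨x₁, ?_⟩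
    calc rho cs (w'⁻¹ * w) (eV x) = rho cs w'⁻¹ (rho cs w (eV x)) := by
          rw [map_mul, Module.End.mul_apply]
      _ = rho cs w'⁻¹ (- eV x') := by rw [hr]
      _ = - rho cs w'⁻¹ (eV x') := by rw [map_neg]
      _ = eV x₁ := by rw [hinvr, neg_neg]
  exact (inv_mul_eq_one.mp hone).symm

lemma isOmega_sq {X : Set B} (hirr : IsIrred M X) {w : W} (hw : IsOmega cs X w) :
    w * w = 1 := by
  apply eq_one_of_plus cs (mul_mem hw.1 hw.1)
  intro x hx
  obtain ⟨x', hx'X, _, hr⟩ := solution_allminus cs hirr hw x hx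
  obtain ⟨x'', _, _, hr'⟩ := solution_allminus cs hirr hw x' hx'X
  exact ⟨x'', by rw [map_mul, Module.End.mul_apply, hr, map_neg, hr', neg_neg]⟩

end OmegaTheory

section OmegaFacts

open CoxeterSystem Real

variable {B : Type*} [Fintype B] {M : CoxeterMatrix B} {W : Type*} [Group W]
variable (cs : CoxeterSystem M W)

lemma omega_spec {X : Set B} (h : ∃ v, IsOmega cs X v) : IsOmega cs X (omega cs X) := by
  rw [omega, dif_pos h]
  exact h.choose_spec

lemma omega_of_not {X : Set B} (h : ¬ ∃ v, IsOmega cs X v) : omega cs X = 1 := by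
  rw [omega, dif_neg h]

lemma omega_mul_self {X : Set B} (hX : IsIrred M X) : omega cs X * omega cs X = 1 := by
  by_cases h : ∃ v, IsOmega cs X v
  · exact isOmega_sq cs hX (omega_spec cs h)
  · rw [omega_of_not cs h, mul_one]

lemma omegaSet_of_no_solution {X Y : Set B} (h : ¬ ∃ v, IsOmega cs X v) :
    omegaSet cs X Y = Y := by
  ext z
  simp only [omegaSet, Set.mem_setOf_eq]
  rw [omega_of_not cs h]
  constructor
  · rintro ⟨y, hy, hz⟩
    simp only [one_mul, inv_one, mul_one] at hz
    rwa [simple_injective cs hz]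
  · intro hz
    exact ⟨z, hz, by simp⟩

lemma simple_image_omegaSet {X Y : Set B} (hYX : Y ⊆ X)
    (hX : IsOmega cs X (omega cs X)) :
    cs.simple '' (omegaSet cs X Y)
      = (fun g => omega cs X * g * (omega cs X)⁻¹) '' (cs.simple '' Y) := by
  ext g
  constructor
  · rintro ⟨z, hz, rfl⟩
    obtain ⟨y, hy, hzy⟩ := hz
    exact ⟨cs.simple y, ⟨y, hy, rfl⟩, hzy.symm⟩
  · rintro ⟨g', ⟨y, hy, rfl⟩, rfl⟩
    obtain ⟨x', hx'X, hcj⟩ := hX.2.2 y (hYX hy)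
    exact ⟨x', ⟨y, hy, hcj.symm⟩, hcj.symm⟩

lemma isOmega_omegaSet {X Y : Set B} (hYX : Y ⊆ X)
    (hX : IsOmega cs X (omega cs X)) {u : W} (hu : IsOmega cs Y u) :
    IsOmega cs (omegaSet cs X Y) (omega cs X * u * (omega cs X)⁻¹) := by
  set ω := omega cs X with hω
  refine ⟨?_, ?_, ?_⟩
  · have hmap : parabolic cs (omegaSet cs X Y)
        = Subgroup.map (MulAut.conj ω).toMonoidHom (parabolic cs Y) := by
      unfold parabolic
      rw [MonoidHom.map_closure, simple_image_omegaSet cs hYX hX]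
      congr 1
    rw [hmap]
    refine Subgroup.mem_map.mpr ⟨u, hu.1, ?_⟩
    simp [MulAut.conj]
  · intro h
    apply hu.2.1
    have : u = ω⁻¹ * (ω * u * ω⁻¹) * ω := by group
    rw [this, h]
    group
  · rintro z ⟨y, hy, hzy⟩
    obtain ⟨y', hy'Y, hcjy⟩ := hu.2.2 y hy
    obtain ⟨x', hx'X, hcjx⟩ := hX.2.2 y' (hYX hy'Y)
    refine ⟨x', ⟨y', hy'Y, hcjx.symm⟩, ?_⟩
    rw [hzy]
    have hgrp : (ω * u * ω⁻¹) * (ω * cs.simple y * ω⁻¹) * (ω * u * ω⁻¹)⁻¹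
        = ω * (u * cs.simple y * u⁻¹) * ω⁻¹ := by group
    rw [hgrp, hcjy]
    exact hcjx

lemma isOmega_of_omegaSet {X Y : Set B} (hYX : Y ⊆ X)
    (hX : IsOmega cs X (omega cs X)) {v : W} (hv : IsOmega cs (omegaSet cs X Y) v) :
    IsOmega cs Y ((omega cs X)⁻¹ * v * omega cs X) := by
  set ω := omega cs X with hω
  refine ⟨?_, ?_, ?_⟩
  · have hmap : parabolic cs (omegaSet cs X Y)
        = Subgroup.map (MulAut.conj ω).toMonoidHom (parabolic cs Y) := by
      unfold parabolic
      rw [MonoidHom.map_closure, simple_image_omegaSet cs hYX hX]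
      congr 1
    have hmem := hv.1
    rw [hmap] at hmem
    obtain ⟨g, hg, hgv⟩ := Subgroup.mem_map.mp hmem
    have : (ω⁻¹ : W) * v * ω = g := by
      have hgv' : ω * g * ω⁻¹ = v := by
        rw [← hgv]
        simp [MulAut.conj]
      rw [← hgv']
      group
    rw [this]
    exact hg
  · intro h
    apply hv.2.1
    have : v = ω * (ω⁻¹ * v * ω) * ω⁻¹ := by group
    rw [this, h]
    group
  · intro y hy
    obtain ⟨x', hx'X, hcjx⟩ := hX.2.2 y (hYX hy)
    have hx'Z : x' ∈ omegaSet cs X Y := ⟨y, hy, hcjx.symm⟩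
    obtain ⟨z', hz'Z, hcjz⟩ := hv.2.2 x' hx'Z
    obtain ⟨y', hy'Y, hzy'⟩ := hz'Z
    refine ⟨y', hy'Y, ?_⟩
    have hgrp : (ω⁻¹ * v * ω) * cs.simple y * (ω⁻¹ * v * ω)⁻¹
        = ω⁻¹ * (v * (ω * cs.simple y * ω⁻¹) * v⁻¹) * ω := by group
    rw [hgrp, hcjx, hcjz, hzy', ← hω]
    group

lemma simple_comm_of_M_two {x y : B} (h : M x y = 2) :
    cs.simple x * cs.simple y = cs.simple y * cs.simple x := by
  have h1 := cs.simple_mul_simple_pow x y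
  rw [h, pow_two] at h1
  have h2 : cs.simple x * cs.simple y = (cs.simple x * cs.simple y)⁻¹ :=
    eq_inv_of_mul_eq_one_left h1
  rw [h2, mul_inv_rev, cs.inv_simple, cs.inv_simple]

lemma parabolic_commute {X Y : Set B} (h2 : ∀ x ∈ X, ∀ y ∈ Y, M x y = 2)
    {u v : W} (hu : u ∈ parabolic cs X) (hv : v ∈ parabolic cs Y) :
    u * v = v * u := by
  have base : ∀ a ∈ cs.simple '' X, ∀ b ∈ cs.simple '' Y, Commute a b := by
    rintro a ⟨x, hx, rfl⟩ b ⟨y, hy, rfl⟩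
    exact simple_comm_of_M_two cs (h2 x hx y hy)
  have key : ∀ g ∈ parabolic cs X, ∀ h ∈ parabolic cs Y, Commute g h := by
    intro g hg
    induction hg using Subgroup.closure_induction with
    | mem a ha =>
      intro h hh
      induction hh using Subgroup.closure_induction with
      | mem b hb => exact base a ha b hb
      | one => exact Commute.one_right a
      | mul b1 b2 _ _ ih1 ih2 => exact Commute.mul_right ih1 ih2
      | inv b1 _ ih => exact Commute.inv_right ih
    | one => intro h _; exact Commute.one_left h
    | mul g1 g2 _ _ ih1 ih2 =>
      intro h hh
      exact Commute.mul_left (ih1 h hh) (ih2 h hh)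
    | inv g1 _ ih =>
      intro h hh
      exact Commute.inv_left (ih h hh)
  exact key u hu v hv

lemma not_irred_union_pairs {X Y : Set B} (hXi : IsIrred M X) (hYi : IsIrred M Y)
    (hXne : X.Nonempty) (hYne : Y.Nonempty) (h : ¬ IsIrred M (X ∪ Y)) :
    ∀ x ∈ X, ∀ y ∈ Y, M x y = 2 := by
  rw [IsIrred, not_not] at h
  obtain ⟨A, A', hA, hA', hdisj, hun, hcross⟩ := h
  have hsub : ∀ (Z : Set B), IsIrred M Z → Z ⊆ A ∪ A' → Z.Nonempty →
      Z ⊆ A ∨ Z ⊆ A' := by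
    intro Z hZ hZsub _
    by_contra hcon
    push_neg at hcon
    obtain ⟨h1, h2⟩ := hcon
    apply hZ
    refine ⟨Z ∩ A, Z ∩ A', ?_, ?_, ?_, ?_, ?_⟩
    · obtain ⟨z, hz, hznB⟩ := Set.not_subset.mp h2
      exact ⟨z, hz, (hZsub hz).resolve_right hznB⟩
    · obtain ⟨z, hz, hznA⟩ := Set.not_subset.mp h1
      exact ⟨z, hz, (hZsub hz).resolve_left hznA⟩
    · exact hdisj.mono Set.inter_subset_right Set.inter_subset_right
    · rw [← Set.inter_union_distrib_left]
      exact Set.inter_eq_self_of_subset_left hZsub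
    · rintro a ⟨_, haA⟩ b ⟨_, hbB⟩
      exact hcross a haA b hbB
  have hXsub : X ⊆ A ∪ A' := by rw [hun]; exact Set.subset_union_left
  have hYsub : Y ⊆ A ∪ A' := by rw [hun]; exact Set.subset_union_right
  have hXor := hsub X hXi hXsub hXne
  have hYor := hsub Y hYi hYsub hYne
  intro x hx y hy
  rcases hXor with hXA | hXB <;> rcases hYor with hYA | hYB
  · exfalso
    obtain ⟨z, hz⟩ := hA'
    have hzXY : z ∈ X ∪ Y := by rw [← hun]; exact Or.inr hz
    have hzA : z ∈ A := by
      rcases hzXY with h | h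
      exacts [hXA h, hYA h]
    exact Set.disjoint_left.mp hdisj hzA hz
  · exact hcross x (hXA hx) y (hYB hy)
  · rw [M.symmetric]
    exact hcross y (hYA hy) x (hXB hx)
  · exfalso
    obtain ⟨z, hz⟩ := hA
    have hzXY : z ∈ X ∪ Y := by rw [← hun]; exact Or.inl hz
    have hzB : z ∈ A' := by
      rcases hzXY with h | h
      exacts [hXB h, hYB h]
    exact Set.disjoint_left.mp hdisj hz hzB

lemma parabolic_singleton_subset (x : B) :
    (parabolic cs {x} : Set W) ⊆ {1, cs.simple x} := by
  have hs := cs.simple_mul_simple_self x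
  let K : Subgroup W :=
    { carrier := {1, cs.simple x}
      one_mem' := Or.inl rfl
      mul_mem' := by
        rintro a b ha hb
        rcases ha with rfl | ha
        · rcases hb with rfl | hb
          · exact Or.inl (one_mul 1)
          · rw [Set.mem_singleton_iff] at hb
            subst hb
            rw [one_mul]
            exact Or.inr rfl
        · rw [Set.mem_singleton_iff] at ha
          subst ha
          rcases hb with rfl | hb
          · rw [mul_one]
            exact Or.inr rfl
          · rw [Set.mem_singleton_iff] at hb
            subst hb
            rw [hs]
            exact Or.inl rfl
      inv_mem' := by
        rintro a ha
        rcases ha with rfl | ha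
        · rw [inv_one]
          exact Or.inl rfl
        · rw [Set.mem_singleton_iff] at ha
          subst ha
          rw [inv_eq_of_mul_eq_one_left hs]
          exact Or.inr rfl }
  have hle : parabolic cs {x} ≤ K := by
    unfold parabolic
    rw [Set.image_singleton]
    apply (Subgroup.closure_le _).mpr
    intro g hg
    rw [Set.mem_singleton_iff] at hg
    subst hg
    exact Or.inr rfl
  exact fun g hg => hle hg

lemma simple_ne_one (x : B) : cs.simple x ≠ 1 := by
  intro h
  have h1 := cs.length_simple x
  rw [h, cs.length_one] at h1
  omega

lemma isOmega_singleton (x : B) : IsOmega cs {x} (cs.simple x) := by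
  refine ⟨?_, simple_ne_one cs x, ?_⟩
  · unfold parabolic
    rw [Set.image_singleton]
    exact Subgroup.subset_closure rfl
  · intro y hy
    rw [Set.mem_singleton_iff] at hy
    subst hy
    refine ⟨y, rfl, ?_⟩
    rw [cs.simple_mul_simple_self, one_mul, cs.inv_simple]

lemma omega_singleton (x : B) : omega cs {x} = cs.simple x := by
  have hex : ∃ v, IsOmega cs ({x} : Set B) v := ⟨_, isOmega_singleton cs x⟩
  have h := omega_spec cs hex
  have hsub := parabolic_singleton_subset cs x h.1
  rcases hsub with h1 | h1
  · exact absurd h1 h.2.1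
  · rwa [Set.mem_singleton_iff] at h1

lemma singleton_mem_F (x : B) : ({x} : Set B) ∈ F cs := by
  refine ⟨Set.singleton_nonempty x, ?_, ?_⟩
  · apply Set.Finite.subset ((Set.finite_singleton (cs.simple x)).insert 1)
    exact parabolic_singleton_subset cs x
  · rintro ⟨X₁, X₂, h1, h2, hdisj, hunion, _⟩
    obtain ⟨a, ha⟩ := h1
    obtain ⟨b, hb⟩ := h2
    have haX : a ∈ X₁ ∪ X₂ := Or.inl ha
    have hbX : b ∈ X₁ ∪ X₂ := Or.inr hb
    rw [hunion, Set.mem_singleton_iff] at haX hbX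
    subst haX
    subst hbX
    exact Set.disjoint_left.mp hdisj ha hb

lemma M_eq_two_of_abelian_sq {x y : B} (hxy : x ≠ y)
    (h : (cs.simple x * cs.simple y) * (cs.simple x * cs.simple y) = 1) :
    M x y = 2 := by
  have hrho : (sig M x * sig M y) * (sig M x * sig M y) = 1 := by
    have h1 := congrArg (rho cs) h
    rw [map_mul, map_mul, map_one, rho_simple, rho_simple] at h1
    exact h1
  have hT2 : ((sig M x * sig M y)^2) (eV x) = eV x := by
    rw [pow_two, hrho, Module.End.one_apply]
  rw [(T_pow hxy 2).1] at hT2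
  set c := cC M x y with hc
  have hx' := congrFun hT2 x
  have hy' := congrFun hT2 y
  simp only [Pi.add_apply, Pi.smul_apply, smul_eq_mul] at hx' hy'
  rw [eV_self, eV_ne hxy, mul_zero, mul_one, add_zero] at hx'
  rw [eV_self, eV_ne (Ne.symm hxy), mul_zero, mul_one, zero_add] at hy'
  -- hx' : pseq c 5 = 1, hy' : pseq c 4 = 0
  norm_num at hx' hy'
  by_cases h0 : M x y = 0
  · exfalso
    rw [hc, cC, if_pos h0, pseq_one_c] at hy'
    norm_num at hy'
  · have hm2 : 2 ≤ M x y := two_le_M M hxy h0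
    by_contra hne
    have hm3 : 3 ≤ M x y := by omega
    set m := M x y with hm
    have hs := sin_theta_pos hm2
    have hcth : c = Real.cos (π/m) := by rw [hc, cC, if_neg h0]
    rw [hcth, pseq_sin hs.ne'] at hx' hy'
    have hsin4 : Real.sin (4 * (π/m)) = 0 := by
      have := hy'
      rw [div_eq_zero_iff] at this
      rcases this with h | h
      · rw [← h]
        norm_num
      · exact absurd h hs.ne'
    have hsin5 : Real.sin (5 * (π/m)) = Real.sin (π/m) := by
      have h5 : Real.sin (((2*2+1 : ℕ):ℝ) * (π/m)) / Real.sin (π/m) = 1 := hx'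
      have := (div_eq_one_iff_eq hs.ne').mp h5
      rw [← this]
      norm_num
    have hcos4 : Real.cos (4 * (π/m)) = 1 := by
      have h54 : (5:ℝ) * (π/m) = 4 * (π/m) + π/m := by ring
      rw [h54, Real.sin_add, hsin4, zero_mul, zero_add] at hsin5
      have := mul_right_cancel₀ hs.ne' (hsin5.trans (one_mul (Real.sin (π/m))).symm)
      exact this
    have hθpos : 0 < π/m := pi_div_m_pos hm2
    have hθle : (π:ℝ)/m ≤ π/3 := by
      apply div_le_div_of_nonneg_left Real.pi_pos.le (by norm_num)
      exact_mod_cast hm3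
    have h4lt : 4 * (π/m) < 2 * π := by nlinarith [Real.pi_pos]
    have h4gt : -(2*π) < 4 * (π/m) := by nlinarith [Real.pi_pos]
    have h40 := (Real.cos_eq_one_iff_of_lt_of_lt h4gt h4lt).mp hcos4
    nlinarith [hθpos]

end OmegaFacts

section Main

open CoxeterSystem

lemma comm_of_closure {G : Type*} [Group G] {S : Set G} (htop : Subgroup.closure S = ⊤)
    (hcomm : ∀ a ∈ S, ∀ b ∈ S, a * b = b * a) : ∀ a b : G, a * b = b * a := by
  have hcent : ∀ a ∈ S, a ∈ Subgroup.center G := by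
    intro a ha
    rw [Subgroup.mem_center_iff]
    intro g
    have hg : g ∈ Subgroup.closure S := by rw [htop]; trivial
    induction hg using Subgroup.closure_induction with
    | mem b hb => exact hcomm b hb a ha
    | one => rw [one_mul, mul_one]
    | mul g1 g2 _ _ ih1 ih2 => exact Commute.mul_left ih1 ih2
    | inv g1 _ ih => exact Commute.inv_left ih
  have hc : Subgroup.center G = ⊤ := by
    rw [eq_top_iff, ← htop, Subgroup.closure_le]
    exact fun a ha => hcent a ha
  intro a b
  have hb : b ∈ Subgroup.center G := by rw [hc]; trivial
  exact Subgroup.mem_center_iff.mp hb a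

variable {B : Type*} [Fintype B] {M : CoxeterMatrix B} {W : Type*} [Group W]
variable (cs : CoxeterSystem M W)

lemma rels_vanish : ∀ r ∈ cactusRels cs,
    FreeGroup.lift (fun X : F cs => omega cs (X : Set B)) r = 1 := by
  intro r hr
  rcases hr with ⟨X, rfl⟩ | ⟨X, Y, Z, hY, hZ, rfl⟩ | ⟨X, Y, hY, rfl⟩
  · rw [map_mul, FreeGroup.lift_apply_of]
    exact omega_mul_self cs X.2.2.2
  · rw [map_mul, map_mul, map_inv, map_mul, FreeGroup.lift_apply_of, FreeGroup.lift_apply_of,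
      FreeGroup.lift_apply_of]
    suffices h : omega cs (X : Set B) * omega cs (Y : Set B)
        = omega cs (Z : Set B) * omega cs (X : Set B) by
      rw [h]
      exact mul_inv_cancel _
    obtain ⟨hYF, hYss⟩ := hY
    have hYX : (Y : Set B) ⊆ (X : Set B) := hYss.subset
    by_cases hexX : ∃ v, IsOmega cs (X : Set B) v
    · have hX := omega_spec cs hexX
      by_cases hexY : ∃ v, IsOmega cs (Y : Set B) v
      · have hY' := omega_spec cs hexY
        have htrans := isOmega_omegaSet cs hYX hX hY'
        rw [← hZ] at htrans
        have hZom : omega cs (Z : Set B)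
            = omega cs (X : Set B) * omega cs (Y : Set B) * (omega cs (X : Set B))⁻¹ :=
          isOmega_unique cs Z.2.2.2 (omega_spec cs ⟨_, htrans⟩) htrans
        rw [hZom]
        group
      · have hYom : omega cs (Y : Set B) = 1 := omega_of_not cs hexY
        have hZno : ¬ ∃ v, IsOmega cs (Z : Set B) v := by
          rintro ⟨v, hv⟩
          apply hexY
          rw [hZ] at hv
          exact ⟨_, isOmega_of_omegaSet cs hYX hX hv⟩
        have hZom : omega cs (Z : Set B) = 1 := omega_of_not cs hZno
        rw [hYom, hZom, mul_one, one_mul]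
    · have hXom : omega cs (X : Set B) = 1 := omega_of_not cs hexX
      have hZY : (Z : Set B) = (Y : Set B) := by
        rw [hZ]
        exact omegaSet_of_no_solution cs hexX
      rw [hXom, mul_one, one_mul, hZY]
  · rw [map_mul, map_mul, map_inv, map_mul, FreeGroup.lift_apply_of, FreeGroup.lift_apply_of]
    suffices h : omega cs (X : Set B) * omega cs (Y : Set B)
        = omega cs (Y : Set B) * omega cs (X : Set B) by
      rw [h]
      exact mul_inv_cancel _
    obtain ⟨hYF, hnotirr⟩ := hY
    have hpairs := not_irred_union_pairs (X.2.2.2) (hYF.2.2) (X.2.1) (hYF.1) hnotirr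
    have hXmem : omega cs (X : Set B) ∈ parabolic cs (X : Set B) := by
      by_cases hex : ∃ v, IsOmega cs (X : Set B) v
      · exact (omega_spec cs hex).1
      · rw [omega_of_not cs hex]
        exact one_mem _
    have hYmem : omega cs (Y : Set B) ∈ parabolic cs (Y : Set B) := by
      by_cases hex : ∃ v, IsOmega cs (Y : Set B) v
      · exact (omega_spec cs hex).1
      · rw [omega_of_not cs hex]
        exact one_mem _
    exact parabolic_commute cs hpairs hXmem hYmem

lemma F_singleton_of_abelian (hW : ∀ a b : W, a * b = b * a) {X : Set B}
    (hX : X ∈ F cs) : ∃ x, X = {x} := by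
  obtain ⟨x, hx⟩ := hX.1
  refine ⟨x, ?_⟩
  ext y
  rw [Set.mem_singleton_iff]
  constructor
  · intro hy
    by_contra hne
    apply hX.2.2
    refine ⟨{y}, X \ {y}, ⟨y, rfl⟩, ⟨x, hx, by simp [Ne.symm hne]⟩, ?_, ?_, ?_⟩
    · rw [Set.disjoint_left]
      rintro a rfl
      simp
    · exact Set.union_diff_cancel (by simpa using hy)
    · rintro a rfl b ⟨hbX, hbne⟩
      rw [Set.mem_singleton_iff] at hbne
      apply M_eq_two_of_abelian_sq cs (Ne.symm hbne)
      have hc := hW (cs.simple b) (cs.simple a)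
      calc (cs.simple a * cs.simple b) * (cs.simple a * cs.simple b)
          = cs.simple a * (cs.simple b * cs.simple a) * cs.simple b := by group
        _ = cs.simple a * (cs.simple a * cs.simple b) * cs.simple b := by rw [hc]
        _ = (cs.simple a * cs.simple a) * (cs.simple b * cs.simple b) := by group
        _ = 1 := by rw [cs.simple_mul_simple_self, cs.simple_mul_simple_self, one_mul]
  · rintro rfl
    exact hx

end Main

section Final

open CoxeterSystem

variable {B : Type*} [Fintype B] {M : CoxeterMatrix B} {W : Type*} [Group W]
variable (cs : CoxeterSystem M W)

lemma simple_sq_of_abelian (hW : ∀ a b : W, a * b = b * a) (a b : B) :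
    (cs.simple a * cs.simple b) * (cs.simple a * cs.simple b) = 1 := by
  have hc := hW (cs.simple b) (cs.simple a)
  calc (cs.simple a * cs.simple b) * (cs.simple a * cs.simple b)
      = cs.simple a * (cs.simple b * cs.simple a) * cs.simple b := by group
    _ = cs.simple a * (cs.simple a * cs.simple b) * cs.simple b := by rw [hc]
    _ = (cs.simple a * cs.simple a) * (cs.simple b * cs.simple b) := by group
    _ = 1 := by rw [cs.simple_mul_simple_self, cs.simple_mul_simple_self, one_mul]

end Final

/-- The cactus group `C(W,S)` is abelian if and only if `W` is abelian. -/
theorem statement6 {B W : Type*} [Fintype B] [Group W] {M : CoxeterMatrix B}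
    (cs : CoxeterSystem M W) :
    (∀ a b : Cactus cs, a * b = b * a) ↔ (∀ a b : W, a * b = b * a) := by
  constructor
  · intro hC
    have hvan := rels_vanish cs
    have hsimple : ∀ x y : B, cs.simple x * cs.simple y = cs.simple y * cs.simple x := by
      intro x y
      have hgen := hC (gen cs ⟨{x}, singleton_mem_F cs x⟩)
        (gen cs ⟨{y}, singleton_mem_F cs y⟩)
      have h1 := congrArg (PresentedGroup.toGroup hvan) hgen
      unfold gen at h1
      rw [map_mul, map_mul, PresentedGroup.toGroup.of, PresentedGroup.toGroup.of] at h1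
      have e1 : omega cs ((⟨{x}, singleton_mem_F cs x⟩ : F cs) : Set B) = cs.simple x :=
        omega_singleton cs x
      have e2 : omega cs ((⟨{y}, singleton_mem_F cs y⟩ : F cs) : Set B) = cs.simple y :=
        omega_singleton cs y
      rw [e1, e2] at h1
      exact h1
    apply comm_of_closure cs.subgroup_closure_range_simple
    rintro a ⟨x, rfl⟩ b ⟨y, rfl⟩
    exact hsimple x y
  · intro hW
    apply comm_of_closure (PresentedGroup.closure_range_of (cactusRels cs))
    rintro a ⟨X, rfl⟩ b ⟨Y, rfl⟩
    by_cases hXY : X = Y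
    · rw [hXY]
    · obtain ⟨x, hxX⟩ := F_singleton_of_abelian cs hW X.2
      obtain ⟨y, hyY⟩ := F_singleton_of_abelian cs hW Y.2
      have hxy : x ≠ y := by
        rintro rfl
        apply hXY
        apply Subtype.ext
        rw [hxX, hyY]
      have hM2 : M.M x y = 2 :=
        M_eq_two_of_abelian_sq cs hxy (simple_sq_of_abelian cs hW x y)
      have hOm : (Y : Set B) ∈ OmegaInf cs (X : Set B) := by
        refine ⟨Y.2, ?_⟩
        intro hirr
        apply hirr
        refine ⟨{x}, {y}, ⟨x, rfl⟩, ⟨y, rfl⟩, ?_, ?_, ?_⟩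
        · rw [Set.disjoint_left]
          rintro a rfl
          simp [hxy]
        · rw [hxX, hyY]
        · rintro a rfl b rfl
          exact hM2
      have hrel : (FreeGroup.of X * FreeGroup.of Y * (FreeGroup.of Y * FreeGroup.of X)⁻¹)
          ∈ cactusRels cs := Or.inr (Or.inr ⟨X, Y, hOm, rfl⟩)
      have h1 : PresentedGroup.mk (cactusRels cs)
          (FreeGroup.of X * FreeGroup.of Y * (FreeGroup.of Y * FreeGroup.of X)⁻¹) = 1 := by
        apply (QuotientGroup.eq_one_iff _).mpr
        exact Subgroup.subset_normalClosure hrel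
      rw [map_mul, map_mul, map_inv, map_mul] at h1
      exact mul_inv_eq_one.mp h1

end CactusFormal
end

section
/- Let G = ℤ/2ℤ ∗ ℤ/2ℤ = ⟨u, v | u² = v² = 1⟩ be the infinite dihedral group. For every n ≥ 2, the n-th term Γ_n(G) of the lower central series of G is the (cyclic) subgroup generated by (uv)^{2^{n-1}}. -/
/-!  Common framework: cactus groups of Coxeter systems. -/

namespace CactusFormal

open scoped Classical

variable {B : Type*} {W : Type*} [Group W] {M : CoxeterMatrix B}

section InfiniteDihedral

open scoped commutatorElement

private abbrev GG := Monoid.Coprod (Multiplicative (ZMod 2)) (Multiplicative (ZMod 2))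

private def uu : GG := Monoid.Coprod.inl (Multiplicative.ofAdd (1 : ZMod 2))
private def vv : GG := Monoid.Coprod.inr (Multiplicative.ofAdd (1 : ZMod 2))
private def tt : GG := uu * vv

private lemma uu_sq : uu * uu = 1 := by
  rw [uu, ← map_mul, show (Multiplicative.ofAdd (1 : ZMod 2)) * (Multiplicative.ofAdd (1 : ZMod 2)) = 1 by decide, map_one]

private lemma vv_sq : vv * vv = 1 := by
  rw [vv, ← map_mul, show (Multiplicative.ofAdd (1 : ZMod 2)) * (Multiplicative.ofAdd (1 : ZMod 2)) = 1 by decide, map_one]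

private lemma uu_inv : uu⁻¹ = uu := inv_eq_of_mul_eq_one_right uu_sq
private lemma vv_inv : vv⁻¹ = vv := inv_eq_of_mul_eq_one_right vv_sq

private lemma u_t_u : uu * tt * uu⁻¹ = tt⁻¹ := by
  rw [uu_inv, tt, mul_inv_rev, uu_inv, vv_inv]
  calc uu * (uu * vv) * uu = (uu * uu) * (vv * uu) := by group
  _ = vv * uu := by rw [uu_sq, one_mul]

private lemma v_t_v : vv * tt * vv⁻¹ = tt⁻¹ := by
  rw [vv_inv, tt, mul_inv_rev, uu_inv, vv_inv]
  calc vv * (uu * vv) * vv = vv * uu * (vv * vv) := by group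
  _ = vv * uu := by rw [vv_sq, mul_one]

private lemma u_t_pow (k : ℤ) : uu * tt ^ k * uu⁻¹ = tt ^ (-k) := by
  rw [← conj_zpow, u_t_u, inv_zpow']

private lemma v_t_pow (k : ℤ) : vv * tt ^ k * vv⁻¹ = tt ^ (-k) := by
  rw [← conj_zpow, v_t_v, inv_zpow']

private lemma two_cases (m : Multiplicative (ZMod 2)) :
    m = 1 ∨ m = Multiplicative.ofAdd 1 := by revert m; decide

private lemma conj_pow (g : GG) (p : ℤ) :
    g * tt ^ p * g⁻¹ = tt ^ p ∨ g * tt ^ p * g⁻¹ = tt ^ (-p) := by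
  induction g using Monoid.Coprod.induction_on generalizing p with
  | inl m =>
    rcases two_cases m with h | h
    · left; simp [h]
    · right; rw [h]; exact u_t_pow p
  | inr n =>
    rcases two_cases n with h | h
    · left; simp [h]
    · right; rw [h]; exact v_t_pow p
  | mul x y hx hy =>
    have key : (x * y) * tt ^ p * (x * y)⁻¹ = x * (y * tt ^ p * y⁻¹) * x⁻¹ := by group
    rcases hy p with h | h <;> rw [key, h]
    · exact hx p
    · rcases hx (-p) with h2 | h2
      · right; exact h2
      · left; rw [h2, neg_neg]

private lemma Znormal (m : ℤ) : (Subgroup.zpowers (tt ^ m)).Normal := by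
  constructor
  intro n hn g
  obtain ⟨j, hj⟩ := hn
  simp only at hj
  subst hj
  rw [← zpow_mul]
  rcases conj_pow g (m * j) with h | h <;> rw [h]
  · exact ⟨j, by show (tt ^ m) ^ j = _; rw [← zpow_mul]⟩
  · exact ⟨-j, by show (tt ^ m) ^ (-j) = _; rw [← zpow_mul, mul_neg]⟩

private lemma comm_mul_left (a b h : GG) : ⁅a * b, h⁆ = a * ⁅b, h⁆ * a⁻¹ * ⁅a, h⁆ := by
  simp only [commutatorElement_def]; group

private lemma comm_mul_right (g a b : GG) : ⁅g, a * b⁆ = ⁅g, a⁆ * (a * ⁅g, b⁆ * a⁻¹) := by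
  simp only [commutatorElement_def]; group

private lemma comm_uv : ⁅uu, vv⁆ = tt ^ (2 : ℤ) := by
  have h2 : tt ^ (2 : ℤ) = tt * tt := by rw [show (2:ℤ) = 1 + 1 by norm_num, zpow_add, zpow_one]
  rw [commutatorElement_def, uu_inv, vv_inv, h2, tt]
  group

private lemma comm_vu : ⁅vv, uu⁆ = tt ^ (-2 : ℤ) := by
  have : tt ^ (-2 : ℤ) = (tt ^ (2:ℤ))⁻¹ := by group
  rw [this, ← comm_uv, commutatorElement_inv]

private lemma base_le : ∀ g h : GG, ⁅g, h⁆ ∈ Subgroup.zpowers (tt ^ (2 : ℤ)) := by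
  have N := Znormal 2
  have Qu : ∀ h : GG, ⁅uu, h⁆ ∈ Subgroup.zpowers (tt ^ (2 : ℤ)) := by
    intro h
    induction h using Monoid.Coprod.induction_on with
    | inl m =>
      rcases two_cases m with h | h
      · rw [h, map_one, commutatorElement_one_right]; exact one_mem _
      · rw [h, show Monoid.Coprod.inl (Multiplicative.ofAdd (1 : ZMod 2)) = uu from rfl,
          commutatorElement_self]
        exact one_mem _
    | inr n =>
      rcases two_cases n with h | h
      · rw [h, map_one, commutatorElement_one_right]; exact one_mem _
      · rw [h, show Monoid.Coprod.inr (Multiplicative.ofAdd (1 : ZMod 2)) = vv from rfl, comm_uv]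
        exact Subgroup.mem_zpowers _
    | mul a b ha hb =>
      rw [comm_mul_right]
      exact mul_mem ha (N.conj_mem _ hb a)
  have Qv : ∀ h : GG, ⁅vv, h⁆ ∈ Subgroup.zpowers (tt ^ (2 : ℤ)) := by
    intro h
    induction h using Monoid.Coprod.induction_on with
    | inl m =>
      rcases two_cases m with h | h
      · rw [h, map_one, commutatorElement_one_right]; exact one_mem _
      · rw [h, show Monoid.Coprod.inl (Multiplicative.ofAdd (1 : ZMod 2)) = uu from rfl, comm_vu]
        exact ⟨-1, by group⟩
    | inr n =>
      rcases two_cases n with h | h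
      · rw [h, map_one, commutatorElement_one_right]; exact one_mem _
      · rw [h, show Monoid.Coprod.inr (Multiplicative.ofAdd (1 : ZMod 2)) = vv from rfl,
          commutatorElement_self]
        exact one_mem _
    | mul a b ha hb =>
      rw [comm_mul_right]
      exact mul_mem ha (N.conj_mem _ hb a)
  intro g
  induction g using Monoid.Coprod.induction_on with
  | inl m =>
    rcases two_cases m with h | h
    · intro hh; rw [h, map_one, commutatorElement_one_left]; exact one_mem _
    · intro hh; rw [h]; exact Qu hh
  | inr n =>
    rcases two_cases n with h | h
    · intro hh; rw [h, map_one, commutatorElement_one_left]; exact one_mem _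
    · intro hh; rw [h]; exact Qv hh
  | mul a b ha hb =>
    intro h
    rw [comm_mul_left]
    exact mul_mem (N.conj_mem _ (hb h) a) (ha h)

private lemma comm_t_u (m : ℤ) : ⁅tt ^ m, uu⁆ = tt ^ (2 * m) := by
  rw [commutatorElement_def]
  calc tt ^ m * uu * (tt ^ m)⁻¹ * uu⁻¹ = tt ^ m * (uu * tt ^ (-m) * uu⁻¹) := by
        rw [← zpow_neg]; group
  _ = tt ^ m * tt ^ m := by rw [u_t_pow, neg_neg]
  _ = tt ^ (2 * m) := by rw [← zpow_add, two_mul]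

private lemma comm_step (m : ℤ) :
    ⁅Subgroup.zpowers (tt ^ m), (⊤ : Subgroup GG)⁆ = Subgroup.zpowers (tt ^ (2 * m)) := by
  apply le_antisymm
  · rw [Subgroup.commutator_le]
    rintro a ⟨j, rfl⟩ g -
    simp only [← zpow_mul]
    have expand : ⁅tt ^ (m * j), g⁆ = tt ^ (m * j) * (g * tt ^ (-(m * j)) * g⁻¹) := by
      rw [commutatorElement_def, ← zpow_neg]; group
    rcases conj_pow g (-(m * j)) with h | h
    · rw [expand, h, ← zpow_add, add_neg_cancel]
      exact one_mem _
    · rw [expand, h, neg_neg, ← zpow_add]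
      refine ⟨j, ?_⟩
      show (tt ^ (2 * m)) ^ j = _
      rw [← zpow_mul]
      congr 1
      ring
  · rw [Subgroup.zpowers_le, ← comm_t_u m]
    exact Subgroup.commutator_mem_commutator (Subgroup.mem_zpowers _) (Subgroup.mem_top _)

private lemma lcs_succ' (n : ℕ) :
    Subgroup.lowerCentralSeries (⊤ : Subgroup GG) (n + 1) = ⁅Subgroup.lowerCentralSeries (⊤ : Subgroup GG) n, (⊤ : Subgroup GG)⁆ := rfl

private lemma lcs (k : ℕ) :
    Subgroup.lowerCentralSeries (⊤ : Subgroup GG) (k + 1) = Subgroup.zpowers (tt ^ ((2 : ℤ) ^ (k + 1))) := by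
  induction k with
  | zero =>
    rw [lcs_succ', Subgroup.lowerCentralSeries_zero]
    apply le_antisymm
    · rw [Subgroup.commutator_le]
      intro g _ h _
      simpa using base_le g h
    · rw [Subgroup.zpowers_le]
      have : ((2:ℤ)^(0+1)) = 2 := by norm_num
      rw [this, ← comm_uv]
      exact Subgroup.commutator_mem_commutator (Subgroup.mem_top _) (Subgroup.mem_top _)
  | succ k ih =>
    rw [lcs_succ', ih, comm_step]
    congr 1
    rw [pow_succ ((2:ℤ)) (k+1), mul_comm]

end InfiniteDihedral

/-- In `G = ℤ/2ℤ ∗ ℤ/2ℤ = ⟨u, v | u² = v² = 1⟩`, for every `n ≥ 2` the `n`-th term of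
the lower central series (paper indexing: `Γ₁(G) = G`, i.e. Mathlib's
`lowerCentralSeries G (n-1)`) is the cyclic subgroup generated by `(uv)^{2^{n-1}}`. -/
theorem statement10 :
    ∀ n : ℕ, 2 ≤ n →
      Subgroup.lowerCentralSeries
          (⊤ : Subgroup (Monoid.Coprod (Multiplicative (ZMod 2)) (Multiplicative (ZMod 2)))) (n - 1) =
        Subgroup.closure
          {(Monoid.Coprod.inl (Multiplicative.ofAdd (1 : ZMod 2)) *
              Monoid.Coprod.inr (Multiplicative.ofAdd (1 : ZMod 2))) ^ 2 ^ (n - 1)} := by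
  intro n hn
  obtain ⟨k, rfl⟩ : ∃ k, n = k + 2 := ⟨n - 2, by omega⟩
  have h1 : k + 2 - 1 = k + 1 := rfl
  rw [h1, ← Subgroup.zpowers_eq_closure]
  show Subgroup.lowerCentralSeries (⊤ : Subgroup GG) (k + 1) = Subgroup.zpowers (tt ^ 2 ^ (k + 1))
  rw [lcs k]
  congr 1

end CactusFormal
end
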